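/- arXiv:1311.0217 — 7 statements merged into one kernel-verified Lean document; each statement's English description precedes it below -/
import Mathlib

section
/- Let A be a commutative nonassociative algebra over a field k equipped with an associating bilinear form ⟨·,·⟩. If A is generated as a (non-unital, non-associative) k-algebra by a set of idempotent elements, then the form is symmetric: ⟨x,y⟩ = ⟨y,x⟩ for all x, y ∈ A. -/
/-- If a commutative nonassociative algebra `A` over a field `k` with an associating
bilinear form `B` is generated (as a non-unital, non-associative `k`-algebra) by a set of
idempotents, then the form is symmetric. -/
theorem form_symmetric_of_generated_by_idempotents
    {k : Type*} [Field k] {A : Type*} [NonUnitalNonAssocCommRing A]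
    [Module k A] [SMulCommClass k A A] [IsScalarTower k A A]
    (B : LinearMap.BilinForm k A)
    (hassoc : ∀ x y z : A, B (x * y) z = B x (y * z))
    (s : Set A) (hidem : ∀ a ∈ s, a * a = a)
    (hgen : NonUnitalAlgebra.adjoin k s = ⊤) :
    ∀ x y : A, B x y = B y x := by
  intro x y
  have hx : x ∈ NonUnitalAlgebra.adjoin k s := hgen ▸ trivial
  induction hx using NonUnitalAlgebra.adjoin_induction generalizing y with
  | mem a ha =>
      have h1 : B a y = B a (a * y) := by
        conv_lhs => rw [← hidem a ha, hassoc]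
      have h2 : B y a = B a (a * y) := by
        conv_lhs => rw [← hidem a ha, ← hassoc, mul_comm y a, hassoc, mul_comm y a]
      rw [h1, h2]
  | add u v hu hv ihu ihv =>
      simp [map_add, ihu y, ihv y]
  | zero => simp
  | mul u v hu hv ihu ihv =>
      rw [hassoc u v y, ihu (v * y), mul_comm v y, hassoc y v u, mul_comm v u, ← hassoc y u v]
  | smul r u hu ihu =>
      simp [map_smul, ihu y]
end

section
/- Let A be a commutative nonassociative algebra over a field k, let a ∈ A be an idempotent (aa = a), and let S ⊆ k be a finite set with 1 ∈ S such that A = ⨁_{λ∈S} A_λ(a), the 1-eigenspace A_1(a) is spanned by a, and for every λ ∈ S with λ ≠ 1 one has A_λ(a)·A_0(a) ⊆ A_λ(a). Then a associates with its 0-eigenvectors: a(xz) = (ax)z for all x ∈ A and all z ∈ A_0(a). -/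
/-- The `l`-eigenspace of the adjoint map `x ↦ a * x` of an element `a` of a commutative
nonassociative algebra. -/
def eig (k : Type*) {A : Type*} [Field k] [NonUnitalNonAssocCommRing A]
    [Module k A] [SMulCommClass k A A] [IsScalarTower k A A] (a : A) (l : k) :
    Submodule k A :=
  Module.End.eigenspace (LinearMap.mul k A a) l

lemma mem_eig_iff {k : Type*} [Field k] {A : Type*} [NonUnitalNonAssocCommRing A]
    [Module k A] [SMulCommClass k A A] [IsScalarTower k A A] {a : A} {l : k} {x : A} :
    x ∈ eig k a l ↔ a * x = l • x := by
  rw [eig, Module.End.mem_eigenspace_iff, LinearMap.mul_apply']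

/-- If `a` is a primitive semisimple idempotent whose eigenvalues lie in a finite set `S ∋ 1`
satisfying the Seress condition (`A_λ · A_0 ⊆ A_λ` for `λ ≠ 1`), then `a` associates with its
`0`-eigenvectors: `a(xz) = (ax)z` for all `x ∈ A` and `z ∈ A_0(a)`. -/
theorem seress_associativity
    {k : Type*} [Field k] {A : Type*} [NonUnitalNonAssocCommRing A]
    [Module k A] [SMulCommClass k A A] [IsScalarTower k A A]
    (a : A) (ha : a * a = a)
    (S : Finset k) (h1S : (1 : k) ∈ S)
    (hsum : (⨆ l ∈ S, eig k a l) = ⊤)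
    (hprim : eig k a 1 = Submodule.span k ({a} : Set A))
    (hfus : ∀ l ∈ S, l ≠ 1 → ∀ x ∈ eig k a l, ∀ z ∈ eig k a 0, x * z ∈ eig k a l) :
    ∀ x z : A, z ∈ eig k a 0 → a * (x * z) = (a * x) * z := by
  intro x z hz
  have hz0 : a * z = 0 := by simpa using mem_eig_iff.mp hz
  let M : Submodule k A :=
    { carrier := {x | a * (x * z) = (a * x) * z}
      add_mem' := by
        intro p q hp hq
        simp only [Set.mem_setOf_eq] at *
        rw [add_mul, mul_add, mul_add, add_mul, hp, hq]
      zero_mem' := by simp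
      smul_mem' := by
        intro c p hp
        simp only [Set.mem_setOf_eq] at *
        rw [smul_mul_assoc, mul_smul_comm, mul_smul_comm, smul_mul_assoc, hp] }
  have hle : (⊤ : Submodule k A) ≤ M := by
    rw [← hsum]
    refine iSup_le fun l => iSup_le fun hl => ?_
    by_cases h1 : l = 1
    · subst h1
      rw [hprim, Submodule.span_le]
      intro y hy
      rw [Set.mem_singleton_iff] at hy
      show a * (y * z) = (a * y) * z
      rw [hy, hz0, mul_zero, ha, hz0]
    · intro p hp
      have e1 := mem_eig_iff.mp (hfus l hl h1 p hp z hz)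
      have e2 := mem_eig_iff.mp hp
      show a * (p * z) = (a * p) * z
      rw [e1, e2, smul_mul_assoc]
  exact hle trivial
end

section
/- (Resurrection principle.) Let A be a commutative nonassociative algebra over a field k, let a ∈ A, and let B ⊆ A be a k-subspace with aB ⊆ B. Let λ ∈ k with λ ≠ 0, and suppose x ∈ A and b_λ, b_0 ∈ B are such that a(x + b_λ) = λ(x + b_λ) and a(x + b_0) = 0. Then x = (1/λ)·a(b_λ − b_0) − b_λ; in particular x ∈ B. -/
/-- Resurrection principle: if `B` is an `a`-stable subspace, `λ ≠ 0`, and `x + b_λ`,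
`x + b_0` are `λ`- resp. `0`-eigenvectors of `ad(a)` with `b_λ, b_0 ∈ B`, then
`x = (1/λ) • a(b_λ − b_0) − b_λ`, and in particular `x ∈ B`. -/
theorem resurrection_principle
    {k : Type*} [Field k] {A : Type*} [NonUnitalNonAssocCommRing A]
    [Module k A] [SMulCommClass k A A] [IsScalarTower k A A]
    (a : A) (B : Submodule k A) (hB : ∀ b ∈ B, a * b ∈ B)
    (lm : k) (hlm : lm ≠ 0) (x : A) (blm b0 : A) (hblm : blm ∈ B) (hb0 : b0 ∈ B)
    (heiglm : a * (x + blm) = lm • (x + blm))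
    (heig0 : a * (x + b0) = 0) :
    x = lm⁻¹ • (a * (blm - b0)) - blm ∧ x ∈ B := by
  have key : a * (blm - b0) = lm • (x + blm) := by
    rw [mul_sub]
    have h1 : a * blm - a * b0 = a * (x + blm) - a * (x + b0) := by rw [mul_add, mul_add]; abel
    rw [h1, heiglm, heig0, sub_zero]
  have hx : x = lm⁻¹ • (a * (blm - b0)) - blm := by
    rw [key, inv_smul_smul₀ hlm]; abel
  refine ⟨hx, ?_⟩
  rw [hx]
  exact Submodule.sub_mem B (Submodule.smul_mem B _ (hB _ (Submodule.sub_mem B hblm hb0))) hblm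
end

section
/- Let k be a field of characteristic 0, A a commutative nonassociative k-algebra, a ∈ A an idempotent (aa = a), λ ∈ k, and α, β, γ ∈ A with aα = 0, aβ = (1/4)β, aγ = (1/32)γ. Set b = λa + α + β + γ, b' = λa + α + β − γ, and σ = ab − (1/32)(a + b). Then aσ = (7/32)σ + ((3/4)λ − 25/1024)a + (7/2048)(b + b'). -/
/-- For an idempotent `a` and `b = λa + α + β + γ` the eigenvector decomposition of `b`
(with `aα = 0`, `aβ = (1/4)β`, `aγ = (1/32)γ`), `b' = λa + α + β − γ` and
`σ = ab − (1/32)(a+b)`, one has `aσ = (7/32)σ + ((3/4)λ − 25/1024)a + (7/2048)(b + b')`. -/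
theorem a_mul_sigma_formula
    {k : Type*} [Field k] [CharZero k] {A : Type*} [NonUnitalNonAssocCommRing A]
    [Module k A] [SMulCommClass k A A] [IsScalarTower k A A]
    (a : A) (ha : a * a = a) (lm : k) (α β γ : A)
    (hα : a * α = 0) (hβ : a * β = (1/4 : k) • β) (hγ : a * γ = (1/32 : k) • γ)
    (b b' σ : A) (hb : b = lm • a + α + β + γ) (hb' : b' = lm • a + α + β - γ)
    (hσ : σ = a * b - (1/32 : k) • (a + b)) :
    a * σ = (7/32 : k) • σ + ((3/4 : k) * lm - 25/1024) • a + (7/2048 : k) • (b + b') := by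
  subst hb hb' hσ
  simp only [mul_add, mul_sub, mul_smul_comm, ha, hα, hβ, hγ, smul_add, smul_sub, smul_smul,
    mul_zero, smul_zero]
  module
end

section
/- In the standing setup, ⟨σ_1, σ_1⟩ = (3/4)λ² + (65/512)λ − 3/2048 + (7/2048)μ. -/
/-- `a` is a `V(4,3)`-axis: an idempotent which is semisimple with spectrum in
`{1, 0, 1/4, 1/32}`, primitive, and whose eigenspaces satisfy the Ising fusion rules. -/
def IsV43Axis (k : Type*) {A : Type*} [Field k] [NonUnitalNonAssocCommRing A]
    [Module k A] [SMulCommClass k A A] [IsScalarTower k A A] (a : A) : Prop :=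
  a * a = a ∧
  (eig k a 1 ⊔ eig k a 0 ⊔ eig k a (1/4) ⊔ eig k a (1/32)) = ⊤ ∧
  eig k a 1 = Submodule.span k ({a} : Set A) ∧
  (∀ x ∈ eig k a 0, ∀ y ∈ eig k a 0, x * y ∈ eig k a 0) ∧
  (∀ x ∈ eig k a 0, ∀ y ∈ eig k a (1/4), x * y ∈ eig k a (1/4)) ∧
  (∀ x ∈ eig k a 0, ∀ y ∈ eig k a (1/32), x * y ∈ eig k a (1/32)) ∧
  (∀ x ∈ eig k a (1/4), ∀ y ∈ eig k a (1/4), x * y ∈ eig k a 1 ⊔ eig k a 0) ∧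
  (∀ x ∈ eig k a (1/4), ∀ y ∈ eig k a (1/32), x * y ∈ eig k a (1/32)) ∧
  (∀ x ∈ eig k a (1/32), ∀ y ∈ eig k a (1/32),
      x * y ∈ eig k a 1 ⊔ eig k a 0 ⊔ eig k a (1/4))

/-- The doubly infinite sequence of axes `a_j`, `j ∈ ℤ`, with `a_{2i} = ρ^i(a_0)` and
`a_{2i+1} = ρ^i(a_1)`, where `ρ = τ1 ∘ τ0`. -/
def aSeq {k : Type*} {A : Type*} [Field k] [NonUnitalNonAssocCommRing A]
    [Module k A] [SMulCommClass k A A] [IsScalarTower k A A]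
    (τ0 τ1 : A ≃ₗ[k] A) (a0 a1 : A) (j : ℤ) : A :=
  if Even j then ((τ0.trans τ1) ^ (j / 2)) a0 else ((τ0.trans τ1) ^ ((j - 1) / 2)) a1

theorem sigma1_with_sigma1
    {k : Type*} [Field k] [CharZero k] {A : Type*} [NonUnitalNonAssocCommRing A]
    [Module k A] [SMulCommClass k A A] [IsScalarTower k A A]
    (B : LinearMap.BilinForm k A)
    (hsymm : ∀ x y : A, B x y = B y x)
    (hassoc : ∀ x y z : A, B (x * y) z = B x (y * z))
    (a0 a1 : A) (ha0 : IsV43Axis k a0) (ha1 : IsV43Axis k a1)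
    (hn0 : B a0 a0 = 1) (hn1 : B a1 a1 = 1)
    (τ0 τ1 : A ≃ₗ[k] A)
    (hτ0p : ∀ x ∈ eig k a0 1 ⊔ eig k a0 0 ⊔ eig k a0 (1/4), τ0 x = x)
    (hτ0m : ∀ x ∈ eig k a0 (1/32), τ0 x = -x)
    (hτ1p : ∀ x ∈ eig k a1 1 ⊔ eig k a1 0 ⊔ eig k a1 (1/4), τ1 x = x)
    (hτ1m : ∀ x ∈ eig k a1 (1/32), τ1 x = -x)
    (hτ0mul : ∀ x y : A, τ0 (x * y) = τ0 x * τ0 y)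
    (hτ1mul : ∀ x y : A, τ1 (x * y) = τ1 x * τ1 y)
    (hτ0B : ∀ x y : A, B (τ0 x) (τ0 y) = B x y)
    (hτ1B : ∀ x y : A, B (τ1 x) (τ1 y) = B x y)
    (a : ℤ → A) (ha : a = aSeq τ0 τ1 a0 a1)
    (lm mu : k) (hlm : lm = B a0 a1) (hmu : mu = B a0 (a 2))
    (σ1 σ2e σ2o : A)
    (hσ1 : σ1 = a0 * a1 - (1/32 : k) • (a0 + a1))
    (hσ2e : σ2e = a0 * a 2 - (1/32 : k) • (a0 + a 2))
    (hσ2o : σ2o = a (-1) * a1 - (1/32 : k) • (a (-1) + a1)) :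
    B σ1 σ1 = (3/4 : k) * lm ^ 2 + (65/512 : k) * lm - 3/2048 + (7/2048 : k) * mu := by
  clear hσ2e hσ2o
  -- membership criterion for eigenspaces
  have hmem : ∀ (b x : A) (l : k), x ∈ eig k b l ↔ b * x = l • x := by
    intro b x l
    rw [eig, Module.End.mem_eigenspace_iff]
    rfl
  -- orthogonality of distinct eigenspaces
  have ortho : ∀ (b x y : A) (α β : k), b * x = α • x → b * y = β • y → α ≠ β →
      B x y = 0 := by
    intro b x y α β hx hy hne
    have h1 : B (b * x) y = B x (b * y) := by rw [mul_comm b x, hassoc]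
    rw [hx, hy, map_smul, LinearMap.smul_apply, map_smul, smul_eq_mul, smul_eq_mul] at h1
    have h2 : (α - β) * B x y = 0 := by linear_combination h1
    rcases mul_eq_zero.mp h2 with h | h
    · exact absurd (sub_eq_zero.mp h) hne
    · exact h
  -- a1 is a 1-eigenvector of itself
  have ha1e : a1 * a1 = (1 : k) • a1 := by rw [ha1.1, one_smul]
  have ha0e : a0 * a0 = (1 : k) • a0 := by rw [ha0.1, one_smul]
  -- decompose a0 with respect to the eigenspaces of a1
  have htop : a0 ∈ eig k a1 1 ⊔ eig k a1 0 ⊔ eig k a1 (1/4) ⊔ eig k a1 (1/32) := by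
    rw [ha1.2.1]; exact Submodule.mem_top
  obtain ⟨w, hw, v32, hv32, hsum⟩ := Submodule.mem_sup.mp htop
  obtain ⟨w', hw', v4, hv4, hsum'⟩ := Submodule.mem_sup.mp hw
  obtain ⟨w1, hw1, v0, hv0, hsum''⟩ := Submodule.mem_sup.mp hw'
  obtain ⟨c, hc⟩ := Submodule.mem_span_singleton.mp (ha1.2.2.1 ▸ hw1)
  have hdec0 : a0 = c • a1 + v0 + v4 + v32 := by
    rw [← hsum, ← hsum', ← hsum'', hc]
  rw [hmem] at hv0 hv4 hv32
  -- orthogonality facts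
  have o10 : B a1 v0 = 0 := ortho a1 a1 v0 1 0 ha1e hv0 (by norm_num)
  have o14 : B a1 v4 = 0 := ortho a1 a1 v4 1 (1/4) ha1e hv4 (by norm_num)
  have o132 : B a1 v32 = 0 := ortho a1 a1 v32 1 (1/32) ha1e hv32 (by norm_num)
  have o04 : B v0 v4 = 0 := ortho a1 v0 v4 0 (1/4) hv0 hv4 (by norm_num)
  have o032 : B v0 v32 = 0 := ortho a1 v0 v32 0 (1/32) hv0 hv32 (by norm_num)
  have o432 : B v4 v32 = 0 := ortho a1 v4 v32 (1/4) (1/32) hv4 hv32 (by norm_num)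
  have o01 : B v0 a1 = 0 := by rw [hsymm]; exact o10
  have o41 : B v4 a1 = 0 := by rw [hsymm]; exact o14
  have o321 : B v32 a1 = 0 := by rw [hsymm]; exact o132
  have o40 : B v4 v0 = 0 := by rw [hsymm]; exact o04
  have o320 : B v32 v0 = 0 := by rw [hsymm]; exact o032
  have o324 : B v32 v4 = 0 := by rw [hsymm]; exact o432
  -- the coefficient c equals lm
  have hc_lm : c = lm := by
    have : B a0 a1 = c := by
      rw [hdec0]
      simp [map_add, LinearMap.add_apply, map_smul, LinearMap.smul_apply,
        o01, o41, o321, hn1, smul_eq_mul]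
    rw [hlm, this]
  rw [hc_lm] at hdec0
  -- the product a0 * a1
  have hprod : a0 * a1 = lm • a1 + (1/4 : k) • v4 + (1/32 : k) • v32 := by
    rw [hdec0]
    rw [add_mul, add_mul, add_mul, smul_mul_assoc, ha1.1,
      mul_comm v0 a1, mul_comm v4 a1, mul_comm v32 a1, hv0, hv4, hv32]
    rw [zero_smul, add_zero]
  -- a 2 = τ1 a0
  have hτ0a0 : τ0 a0 = a0 := by
    apply hτ0p
    exact Submodule.mem_sup_left (Submodule.mem_sup_left ((hmem a0 a0 1).mpr ha0e))
  have ha2 : a 2 = τ1 a0 := by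
    rw [ha]
    show (if Even (2:ℤ) then ((τ0.trans τ1) ^ ((2:ℤ) / 2)) a0
        else ((τ0.trans τ1) ^ (((2:ℤ) - 1) / 2)) a1) = τ1 a0
    rw [if_pos (by decide)]
    norm_num
    exact hτ0a0
  -- τ1 a0 flips v32
  have hτ1a1 : τ1 a1 = a1 := by
    apply hτ1p
    exact Submodule.mem_sup_left (Submodule.mem_sup_left ((hmem a1 a1 1).mpr ha1e))
  have hτ1v0 : τ1 v0 = v0 := by
    apply hτ1p
    exact Submodule.mem_sup_left (Submodule.mem_sup_right ((hmem a1 v0 0).mpr hv0))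
  have hτ1v4 : τ1 v4 = v4 := by
    apply hτ1p
    exact Submodule.mem_sup_right ((hmem a1 v4 (1/4)).mpr hv4)
  have hτ1v32 : τ1 v32 = -v32 := hτ1m v32 ((hmem a1 v32 (1/32)).mpr hv32)
  have hτ1a0 : τ1 a0 = lm • a1 + v0 + v4 - v32 := by
    rw [hdec0, map_add, map_add, map_add, map_smul, hτ1a1, hτ1v0, hτ1v4, hτ1v32]
    abel
  -- the three scalar equations
  have E1 : (1 : k) = lm^2 + B v0 v0 + B v4 v4 + B v32 v32 := by
    rw [← hn0]
    nth_rewrite 1 [hdec0, hdec0]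
    simp [map_add, LinearMap.add_apply, map_smul, LinearMap.smul_apply, smul_eq_mul,
      o01, o41, o321, o10, o14, o132, o04, o032, o432, o40, o320, o324, hn1]
    ring
  have E2 : lm = lm^2 + (1/4 : k) * B v4 v4 + (1/32 : k) * B v32 v32 := by
    have h : B a0 a1 = B a0 (a0 * a1) := by
      conv_lhs => rw [← ha0.1, hassoc]
    have h2 : B a0 (a0 * a1) = lm^2 + (1/4 : k) * B v4 v4 + (1/32 : k) * B v32 v32 := by
      rw [hprod]
      nth_rewrite 1 [hdec0]
      simp [map_add, LinearMap.add_apply, map_smul, LinearMap.smul_apply, smul_eq_mul,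
        o01, o41, o321, o10, o14, o132, o04, o032, o432, o40, o320, o324, hn1]
      ring
    exact hlm.trans (h.trans h2)
  have E3 : mu = lm^2 + B v0 v0 + B v4 v4 - B v32 v32 := by
    rw [hmu, ha2, hτ1a0]
    nth_rewrite 1 [hdec0]
    simp [map_add, map_sub, LinearMap.add_apply, LinearMap.sub_apply, map_smul,
      LinearMap.smul_apply, smul_eq_mul,
      o01, o41, o321, o10, o14, o132, o04, o032, o432, o40, o320, o324, hn1]
    ring
  -- expansion of B σ1 σ1
  have BpA0 : B (a0 * a1) a0 = lm := by
    rw [mul_comm a0 a1, hassoc, ha0.1, hsymm, ← hlm]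
  have BpA1 : B (a0 * a1) a1 = lm := by
    rw [hassoc, ha1.1, ← hlm]
  have E4 : B σ1 σ1 = lm^2 + (1/16 : k) * B v4 v4 + (1/1024 : k) * B v32 v32
      - (1/8 : k) * lm + (1/1024 : k) * (2 + 2 * lm) := by
    have hBpp : B (a0 * a1) (a0 * a1) = lm^2 + (1/16 : k) * B v4 v4
        + (1/1024 : k) * B v32 v32 := by
      rw [hprod]
      simp [map_add, LinearMap.add_apply, map_smul, LinearMap.smul_apply, smul_eq_mul,
        o01, o41, o321, o10, o14, o132, o04, o032, o432, o40, o320, o324, hn1]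
      ring
    have s1 : B a0 (a0 * a1) = lm := by rw [hsymm]; exact BpA0
    have s2 : B a1 (a0 * a1) = lm := by rw [hsymm]; exact BpA1
    have s3 : B a0 a1 = lm := hlm.symm
    have s4 : B a1 a0 = lm := by rw [hsymm]; exact hlm.symm
    rw [hσ1]
    simp only [map_sub, map_add, map_smul, LinearMap.sub_apply, LinearMap.add_apply,
      LinearMap.smul_apply, smul_eq_mul, hBpp, BpA0, BpA1, s1, s2, s3, s4, hn0, hn1]
    ring
  linear_combination E4 - (1/4 : k) * E2 + (7/2048 : k) * E1 - (7/2048 : k) * E3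
end

section
/- In the standing setup, σ_1σ_1 = (1/3)[(−(5/4)λ − 13/512)σ_1 − (7/512)σ_2^e + (21/2048)σ_2^o] + (7/3)[((1/2)λ² − (1/128)λ + (1/512)μ − 1/32768)a_0 + ((7/256)λ − 35/65536)(a_1 + a_{−1}) + (7/65536)(a_2 + a_{−2})]. -/
section Helpers
set_option linter.unusedSectionVars false
variable {k : Type*} [Field k] [CharZero k] {A : Type*} [NonUnitalNonAssocCommRing A]
    [Module k A] [SMulCommClass k A A] [IsScalarTower k A A]

lemma mem_eig {a x : A} {l : k} : x ∈ eig k a l ↔ a * x = l • x := by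
  rw [eig, Module.End.mem_eigenspace_iff]
  simp [LinearMap.mul_apply']

lemma exists_decomp (a : A)
    (hsup : (eig k a 1 ⊔ eig k a 0 ⊔ eig k a (1/4) ⊔ eig k a (1/32)) = ⊤)
    (hspan : eig k a 1 = Submodule.span k ({a} : Set A)) (x : A) :
    ∃ (t : k) (x0 x4 x32 : A), x0 ∈ eig k a 0 ∧ x4 ∈ eig k a (1/4) ∧ x32 ∈ eig k a (1/32) ∧
      x = t • a + x0 + x4 + x32 := by
  have hx : x ∈ (eig k a 1 ⊔ eig k a 0 ⊔ eig k a (1/4) ⊔ eig k a (1/32)) :=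
    hsup ▸ Submodule.mem_top
  obtain ⟨y, hy, x32, h32, rfl⟩ := Submodule.mem_sup.mp hx
  obtain ⟨z, hz, x4, h4, rfl⟩ := Submodule.mem_sup.mp hy
  obtain ⟨x1, h1, x0, h0, rfl⟩ := Submodule.mem_sup.mp hz
  rw [hspan] at h1
  obtain ⟨t, rfl⟩ := Submodule.mem_span_singleton.mp h1
  exact ⟨t, x0, x4, x32, h0, h4, h32, rfl⟩

lemma mem_a_eig1 (a : A) (hspan : eig k a 1 = Submodule.span k ({a} : Set A)) :
    a ∈ eig k a 1 := by
  rw [hspan]; exact Submodule.mem_span_singleton_self a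

lemma mem_even {a : A} {t : k} {x0 x4 : A} (hspan : eig k a 1 = Submodule.span k ({a} : Set A))
    (h0 : x0 ∈ eig k a 0) (h4 : x4 ∈ eig k a (1/4)) :
    t • a + x0 + x4 ∈ eig k a 1 ⊔ eig k a 0 ⊔ eig k a (1/4) := by
  refine add_mem (Submodule.mem_sup_left (add_mem ?_ ?_)) (Submodule.mem_sup_right h4)
  · exact Submodule.mem_sup_left (Submodule.smul_mem _ t (mem_a_eig1 a hspan))
  · exact Submodule.mem_sup_right h0

lemma tau_fix (a : A) (τ : A ≃ₗ[k] A) (hspan : eig k a 1 = Submodule.span k ({a} : Set A))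
    (hτp : ∀ x ∈ eig k a 1 ⊔ eig k a 0 ⊔ eig k a (1/4), τ x = x) : τ a = a :=
  hτp a (Submodule.mem_sup_left (Submodule.mem_sup_left (mem_a_eig1 a hspan)))

lemma tau_decomp (a : A) (τ : A ≃ₗ[k] A)
    (hspan : eig k a 1 = Submodule.span k ({a} : Set A))
    (hτp : ∀ x ∈ eig k a 1 ⊔ eig k a 0 ⊔ eig k a (1/4), τ x = x)
    (hτm : ∀ x ∈ eig k a (1/32), τ x = -x)
    {x : A} {t : k} {x0 x4 x32 : A} (h0 : x0 ∈ eig k a 0) (h4 : x4 ∈ eig k a (1/4))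
    (h32 : x32 ∈ eig k a (1/32)) (hx : x = t • a + x0 + x4 + x32) :
    τ x = t • a + x0 + x4 - x32 := by
  rw [hx, map_add, hτp _ (mem_even hspan h0 h4), hτm _ h32, sub_eq_add_neg]

lemma tau_invol (a : A) (τ : A ≃ₗ[k] A)
    (hsup : (eig k a 1 ⊔ eig k a 0 ⊔ eig k a (1/4) ⊔ eig k a (1/32)) = ⊤)
    (hspan : eig k a 1 = Submodule.span k ({a} : Set A))
    (hτp : ∀ x ∈ eig k a 1 ⊔ eig k a 0 ⊔ eig k a (1/4), τ x = x)
    (hτm : ∀ x ∈ eig k a (1/32), τ x = -x) (x : A) : τ (τ x) = x := by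
  obtain ⟨t, x0, x4, x32, h0, h4, h32, hx⟩ := exists_decomp a hsup hspan x
  have h1 := tau_decomp a τ hspan hτp hτm h0 h4 h32 hx
  have h2 : τ (τ x) = t • a + x0 + x4 - -x32 := by
    rw [h1, sub_eq_add_neg, map_add, hτp _ (mem_even hspan h0 h4), map_neg, hτm _ h32,
      sub_eq_add_neg]
  rw [h2, hx]; module

lemma B_eig_zero (B : LinearMap.BilinForm k A)
    (hassoc : ∀ x y z : A, B (x * y) z = B x (y * z))
    {a : A} (haa : a * a = a) {l : k} (hl : l ≠ 1) {x : A} (hx : x ∈ eig k a l) :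
    B x a = 0 := by
  have h1 : B (x * a) a = B x a := by rw [hassoc x a a, haa]
  have h2 : x * a = l • x := by rw [mul_comm]; exact mem_eig.mp hx
  rw [h2, map_smul] at h1
  simp only [LinearMap.smul_apply, smul_eq_mul] at h1
  have h3 : (l - 1) * B x a = 0 := by linear_combination h1
  exact (mul_eq_zero.mp h3).resolve_left (sub_ne_zero.mpr hl)

lemma B_coeff (B : LinearMap.BilinForm k A)
    (hassoc : ∀ x y z : A, B (x * y) z = B x (y * z))
    {a : A} (haa : a * a = a) (hBaa : B a a = 1)
    {x : A} {t : k} {x0 x4 x32 : A} (h0 : x0 ∈ eig k a 0) (h4 : x4 ∈ eig k a (1/4))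
    (h32 : x32 ∈ eig k a (1/32)) (hx : x = t • a + x0 + x4 + x32) :
    B x a = t := by
  have e0 : B x0 a = 0 := B_eig_zero B hassoc haa (by norm_num) h0
  have e4 : B x4 a = 0 := B_eig_zero B hassoc haa (by norm_num) h4
  have e32 : B x32 a = 0 := B_eig_zero B hassoc haa (by norm_num) h32
  rw [hx]
  simp only [map_add, map_smul, LinearMap.add_apply, LinearMap.smul_apply, smul_eq_mul,
    e0, e4, e32, hBaa]
  ring


lemma star0 (B : LinearMap.BilinForm k A)
    (hassoc : ∀ x y z : A, B (x * y) z = B x (y * z))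
    (a : A) (τ : A ≃ₗ[k] A)
    (hsup : (eig k a 1 ⊔ eig k a 0 ⊔ eig k a (1/4) ⊔ eig k a (1/32)) = ⊤)
    (hspan : eig k a 1 = Submodule.span k ({a} : Set A))
    (haa : a * a = a) (hBaa : B a a = 1)
    (hτp : ∀ x ∈ eig k a 1 ⊔ eig k a 0 ⊔ eig k a (1/4), τ x = x)
    (hτm : ∀ x ∈ eig k a (1/32), τ x = -x)
    {x : A} (hτx : τ x = x) :
    a * (a * x) = (1/4 : k) • (a * x) + ((3/4) * B x a) • a := by
  obtain ⟨t, x0, x4, x32, h0, h4, h32, hx⟩ := exists_decomp a hsup hspan x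
  have htau := tau_decomp a τ hspan hτp hτm h0 h4 h32 hx
  rw [hτx, hx] at htau
  have h32z : x32 = 0 := by
    have h2 : (2:k) • x32 = 0 := by linear_combination (norm := module) htau
    have := smul_eq_zero.mp h2
    simpa using this
  have hBx : B x a = t := B_coeff B hassoc haa hBaa h0 h4 h32 hx
  have e0 : a * x0 = 0 := by
    have := mem_eig.mp h0; rwa [zero_smul] at this
  have e4 : a * x4 = (1/4 : k) • x4 := mem_eig.mp h4
  have hax : a * x = t • a + (1/4 : k) • x4 := by
    rw [hx, h32z]
    simp only [mul_add, mul_smul_comm, haa, e0, e4, mul_zero, add_zero]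
    try module
  have haax : a * (a * x) = t • a + (1/16 : k) • x4 := by
    rw [hax]
    simp only [mul_add, mul_smul_comm, haa, e4]
    module
  rw [haax, hax, hBx]
  module

lemma sig_fix (a : A) (τ : A ≃ₗ[k] A)
    (hsup : (eig k a 1 ⊔ eig k a 0 ⊔ eig k a (1/4) ⊔ eig k a (1/32)) = ⊤)
    (hspan : eig k a 1 = Submodule.span k ({a} : Set A))
    (haa : a * a = a)
    (hτp : ∀ x ∈ eig k a 1 ⊔ eig k a 0 ⊔ eig k a (1/4), τ x = x)
    (hτm : ∀ x ∈ eig k a (1/32), τ x = -x) (b : A) :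
    τ (a * b - (1/32 : k) • (a + b)) = a * b - (1/32 : k) • (a + b) := by
  obtain ⟨t, x0, x4, x32, h0, h4, h32, hb⟩ := exists_decomp a hsup hspan b
  have htaub := tau_decomp a τ hspan hτp hτm h0 h4 h32 hb
  have e0 : a * x0 = 0 := by
    have := mem_eig.mp h0; rwa [zero_smul] at this
  have e4 : a * x4 = (1/4 : k) • x4 := mem_eig.mp h4
  have e32 : a * x32 = (1/32 : k) • x32 := mem_eig.mp h32
  have hab : a * b = t • a + (1/4 : k) • x4 + (1/32 : k) • x32 := by
    rw [hb]
    simp only [mul_add, mul_smul_comm, haa, e0, e4, e32]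
    module
  have hfix : τ (t • a + (1/4 : k) • x4) = t • a + (1/4 : k) • x4 := by
    apply hτp
    refine add_mem (Submodule.mem_sup_left (Submodule.mem_sup_left
      (Submodule.smul_mem _ t (mem_a_eig1 a hspan)))) (Submodule.mem_sup_right
      (Submodule.smul_mem _ _ h4))
  have hτa : τ a = a := tau_fix a τ hspan hτp
  have h1 : τ (a * b) = t • a + (1/4 : k) • x4 - (1/32 : k) • x32 := by
    have : a * b = (t • a + (1/4 : k) • x4) + (1/32 : k) • x32 := by rw [hab]; try module
    rw [this, map_add, hfix, map_smul, hτm _ h32]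
    try module
  rw [map_sub, map_smul, map_add, hτa, h1, htaub, hab, hb]
  module

lemma axis_P1 (B : LinearMap.BilinForm k A)
    (hassoc : ∀ x y z : A, B (x * y) z = B x (y * z))
    (a : A) (τ : A ≃ₗ[k] A)
    (hsup : (eig k a 1 ⊔ eig k a 0 ⊔ eig k a (1/4) ⊔ eig k a (1/32)) = ⊤)
    (hspan : eig k a 1 = Submodule.span k ({a} : Set A))
    (haa : a * a = a) (hBaa : B a a = 1)
    (hτp : ∀ x ∈ eig k a 1 ⊔ eig k a 0 ⊔ eig k a (1/4), τ x = x)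
    (hτm : ∀ x ∈ eig k a (1/32), τ x = -x) (b : A) :
    a * (a * b - (1/32 : k) • (a + b)) = (7/32 : k) • (a * b - (1/32 : k) • (a + b)) +
      ((3/4) * B b a - 25/1024) • a + (7/2048 : k) • (b + τ b) := by
  obtain ⟨t, x0, x4, x32, h0, h4, h32, hb⟩ := exists_decomp a hsup hspan b
  have htaub := tau_decomp a τ hspan hτp hτm h0 h4 h32 hb
  have hBb : B b a = t := B_coeff B hassoc haa hBaa h0 h4 h32 hb
  have e0 : a * x0 = 0 := by
    have := mem_eig.mp h0; rwa [zero_smul] at this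
  have e4 : a * x4 = (1/4 : k) • x4 := mem_eig.mp h4
  have e32 : a * x32 = (1/32 : k) • x32 := mem_eig.mp h32
  have hab : a * b = t • a + (1/4 : k) • x4 + (1/32 : k) • x32 := by
    rw [hb]
    simp only [mul_add, mul_smul_comm, haa, e0, e4, e32]
    module
  have haab : a * (a * b) = t • a + (1/16 : k) • x4 + (1/1024 : k) • x32 := by
    rw [hab]
    simp only [mul_add, mul_smul_comm, haa, e0, e4, e32]
    module
  have hLHS : a * (a * b - (1/32 : k) • (a + b)) =
      a * (a * b) - (1/32 : k) • (a * a) - (1/32 : k) • (a * b) := by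
    simp only [mul_sub, mul_smul_comm, mul_add]
    module
  rw [hLHS, haab, hab, haa, hBb, htaub, hb]
  module

end Helpers


set_option maxHeartbeats 4000000 in
theorem sigma1_mul_sigma1
    {k : Type*} [Field k] [CharZero k] {A : Type*} [NonUnitalNonAssocCommRing A]
    [Module k A] [SMulCommClass k A A] [IsScalarTower k A A]
    (B : LinearMap.BilinForm k A)
    (hsymm : ∀ x y : A, B x y = B y x)
    (hassoc : ∀ x y z : A, B (x * y) z = B x (y * z))
    (a0 a1 : A) (ha0 : IsV43Axis k a0) (ha1 : IsV43Axis k a1)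
    (hn0 : B a0 a0 = 1) (hn1 : B a1 a1 = 1)
    (τ0 τ1 : A ≃ₗ[k] A)
    (hτ0p : ∀ x ∈ eig k a0 1 ⊔ eig k a0 0 ⊔ eig k a0 (1/4), τ0 x = x)
    (hτ0m : ∀ x ∈ eig k a0 (1/32), τ0 x = -x)
    (hτ1p : ∀ x ∈ eig k a1 1 ⊔ eig k a1 0 ⊔ eig k a1 (1/4), τ1 x = x)
    (hτ1m : ∀ x ∈ eig k a1 (1/32), τ1 x = -x)
    (hτ0mul : ∀ x y : A, τ0 (x * y) = τ0 x * τ0 y)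
    (hτ1mul : ∀ x y : A, τ1 (x * y) = τ1 x * τ1 y)
    (hτ0B : ∀ x y : A, B (τ0 x) (τ0 y) = B x y)
    (hτ1B : ∀ x y : A, B (τ1 x) (τ1 y) = B x y)
    (a : ℤ → A) (ha : a = aSeq τ0 τ1 a0 a1)
    (lm mu : k) (hlm : lm = B a0 a1) (hmu : mu = B a0 (a 2))
    (σ1 σ2e σ2o : A)
    (hσ1 : σ1 = a0 * a1 - (1/32 : k) • (a0 + a1))
    (hσ2e : σ2e = a0 * a 2 - (1/32 : k) • (a0 + a 2))
    (hσ2o : σ2o = a (-1) * a1 - (1/32 : k) • (a (-1) + a1)) :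
    σ1 * σ1 =
      (1/3 : k) • ((-((5/4 : k) * lm) - 13/512) • σ1 - (7/512 : k) • σ2e +
          (21/2048 : k) • σ2o) +
      (7/3 : k) • (((1/2 : k) * lm ^ 2 - (1/128 : k) * lm + (1/512 : k) * mu - 1/32768) • a0 +
          ((7/256 : k) * lm - 35/65536) • (a 1 + a (-1)) + (7/65536 : k) • (a 2 + a (-2))) := by
  obtain ⟨hid0, hsup0, hspan0, hF00, hF04, hF032, hF44, hF432, hF3232⟩ := ha0
  obtain ⟨hid1, hsup1, hspan1, -, -, -, -, -, -⟩ := ha1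
  have hτ0a0 : τ0 a0 = a0 := tau_fix a0 τ0 hspan0 hτ0p
  have hτ1a1 : τ1 a1 = a1 := tau_fix a1 τ1 hspan1 hτ1p
  have hτ0i : ∀ x, τ0 (τ0 x) = x := tau_invol a0 τ0 hsup0 hspan0 hτ0p hτ0m
  have hτ1i : ∀ x, τ1 (τ1 x) = x := tau_invol a1 τ1 hsup1 hspan1 hτ1p hτ1m
  have he1 : a 1 = a1 := by
    rw [ha]; unfold aSeq
    rw [if_neg (by decide)]
    norm_num
  have hem1 : a (-1) = τ0 a1 := by
    rw [ha]; unfold aSeq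
    rw [if_neg (by decide)]
    have hstep : (τ0.trans τ1) (τ0 a1) = a1 := by
      rw [LinearEquiv.trans_apply, hτ0i, hτ1a1]
    have : ((-1 : ℤ) - 1)/2 = -1 := by decide
    rw [this, zpow_neg, zpow_one]
    conv_lhs => rw [← hstep]
    show (τ0.trans τ1).symm ((τ0.trans τ1) (τ0 a1)) = τ0 a1
    exact LinearEquiv.symm_apply_apply _ _
  have he2 : a 2 = τ1 a0 := by
    rw [ha]; unfold aSeq
    rw [if_pos (by decide)]
    have : (2 : ℤ)/2 = 1 := by decide
    rw [this, zpow_one, LinearEquiv.trans_apply, hτ0a0]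
  have hem2 : a (-2) = τ0 (τ1 a0) := by
    rw [ha]; unfold aSeq
    rw [if_pos (by decide)]
    have hstep : (τ0.trans τ1) (τ0 (τ1 a0)) = a0 := by
      rw [LinearEquiv.trans_apply, hτ0i, hτ1i]
    have : ((-2 : ℤ))/2 = -1 := by decide
    rw [this, zpow_neg, zpow_one]
    conv_lhs => rw [← hstep]
    show (τ0.trans τ1).symm ((τ0.trans τ1) (τ0 (τ1 a0))) = τ0 (τ1 a0)
    exact LinearEquiv.symm_apply_apply _ _
  rw [he1, he2, hem1, hem2]
  rw [he2] at hσ2e hmu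
  rw [hem1] at hσ2o
  have hB10 : B a1 a0 = lm := by rw [hlm]; exact hsymm a1 a0
  have hB20 : B (τ1 a0) a0 = mu := by rw [hmu]; exact hsymm (τ1 a0) a0
  obtain ⟨t, u, v, w, hu, hv, hw, hdec0⟩ := exists_decomp a0 hsup0 hspan0 a1
  have htlm : t = lm := by
    rw [← hB10]; exact (B_coeff B hassoc hid0 hn0 hu hv hw hdec0).symm
  have hdec : a1 = lm • a0 + u + v + w := by rw [hdec0, htlm]
  have heigu : a0 * u = 0 := by
    have := mem_eig.mp hu; rwa [zero_smul] at this
  have heigv : a0 * v = (1/4 : k) • v := mem_eig.mp hv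
  have heigw : a0 * w = (1/32 : k) • w := mem_eig.mp hw
  have hτ0u : τ0 u = u := hτ0p u (Submodule.mem_sup_left (Submodule.mem_sup_right hu))
  have hτ0v : τ0 v = v := hτ0p v (Submodule.mem_sup_right hv)
  have hτ0w : τ0 w = -w := hτ0m w hw
  have ham1 : τ0 a1 = lm • a0 + u + v - w := by
    have h := congrArg τ0 hdec
    rw [map_add, map_add, map_add, map_smul, hτ0a0, hτ0u, hτ0v, hτ0w] at h
    linear_combination (norm := module) h
  have hA4 : a0 * a1 = σ1 + (1/32 : k) • (a0 + a1) := by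
    linear_combination (norm := module) -hσ1
  have hfixσ1 : τ0 σ1 = σ1 := by
    rw [hσ1]; exact sig_fix a0 τ0 hsup0 hspan0 hid0 hτ0p hτ0m a1
  have hA5 : a0 * (τ0 a1) = σ1 + (1/32 : k) • (a0 + τ0 a1) := by
    have h := congrArg τ0 hA4
    rw [hτ0mul, hτ0a0, map_add, map_smul, map_add, hτ0a0, hfixσ1] at h
    exact h
  have hA6 : a0 * (τ1 a0) = σ2e + (1/32 : k) • (a0 + τ1 a0) := by
    linear_combination (norm := module) -hσ2e
  have hfixσ2e : τ0 σ2e = σ2e := by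
    rw [hσ2e]; exact sig_fix a0 τ0 hsup0 hspan0 hid0 hτ0p hτ0m (τ1 a0)
  have hA7 : a0 * (τ0 (τ1 a0)) = σ2e + (1/32 : k) • (a0 + τ0 (τ1 a0)) := by
    have h := congrArg τ0 hA6
    rw [hτ0mul, hτ0a0, map_add, map_smul, map_add, hτ0a0, hfixσ2e] at h
    exact h
  have hA8 : a1 * (τ0 a1) = σ2o + (1/32 : k) • (a1 + τ0 a1) := by
    linear_combination (norm := module) (-1 : k) • hσ2o - mul_comm (τ0 a1) a1
  have hidm1 : (τ0 a1) * (τ0 a1) = τ0 a1 := by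
    have h := congrArg τ0 hid1
    rw [hτ0mul] at h
    exact h
  have hK1 : a0 * σ1 = (7/32 : k) • σ1 + ((3/4) * lm - 25/1024) • a0 +
      (7/2048 : k) • (a1 + τ0 a1) := by
    have h := axis_P1 B hassoc a0 τ0 hsup0 hspan0 hid0 hn0 hτ0p hτ0m a1
    rw [← hσ1, hB10] at h
    exact h
  have hσ1r : a1 * a0 - (1/32 : k) • (a1 + a0) = σ1 := by
    linear_combination (norm := module) (-1 : k) • hσ1 + mul_comm a1 a0
  have hK2 : a1 * σ1 = (7/32 : k) • σ1 + ((3/4) * lm - 25/1024) • a1 +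
      (7/2048 : k) • (a0 + τ1 a0) := by
    have h := axis_P1 B hassoc a1 τ1 hsup1 hspan1 hid1 hn1 hτ1p hτ1m a0
    rw [hσ1r, ← hlm] at h
    exact h
  have hfixσ1' : τ1 σ1 = σ1 := by
    have h := sig_fix a1 τ1 hsup1 hspan1 hid1 hτ1p hτ1m a0
    rw [hσ1r] at h
    exact h
  have hK3 : (τ0 a1) * σ1 = (7/32 : k) • σ1 + ((3/4) * lm - 25/1024) • (τ0 a1) +
      (7/2048 : k) • (a0 + τ0 (τ1 a0)) := by
    have h := congrArg τ0 hK2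
    rw [hτ0mul, hfixσ1] at h
    simp only [map_add, map_smul, hτ0a0, hfixσ1] at h
    linear_combination (norm := module) h
  have hK4 : a0 * σ2e = (7/32 : k) • σ2e + ((3/4) * mu - 25/1024) • a0 +
      (7/2048 : k) • (τ1 a0 + τ0 (τ1 a0)) := by
    have h := axis_P1 B hassoc a0 τ0 hsup0 hspan0 hid0 hn0 hτ0p hτ0m (τ1 a0)
    rw [← hσ2e, hB20] at h
    exact h
  have hf00 : a0 * (u * u) = 0 := by
    have := mem_eig.mp (hF00 u hu u hu); rwa [zero_smul] at this
  have hf00b : a0 * (a0 * (u * u)) = 0 := by rw [hf00, mul_zero]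
  have hf04 : a0 * (u * v) = (1/4 : k) • (u * v) := mem_eig.mp (hF04 u hu v hv)
  have hf04b : a0 * (a0 * (u * v)) = (1/16 : k) • (u * v) := by
    rw [hf04, mul_smul_comm, hf04]; module
  have hVV44 := hF44 v hv v hv
  obtain ⟨y1, hy1, y0, hy0, hvvsum⟩ := Submodule.mem_sup.mp hVV44
  rw [hspan0] at hy1
  obtain ⟨s, rfl⟩ := Submodule.mem_span_singleton.mp hy1
  have hy0e : a0 * y0 = 0 := by
    have := mem_eig.mp hy0; rwa [zero_smul] at this
  have hvv0 : a0 * (v * v) = s • a0 := by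
    rw [← hvvsum, mul_add, mul_smul_comm, hid0, hy0e, add_zero]
  have hgfix : a0 * (a0 * (v * v)) = a0 * (v * v) := by
    rw [hvv0, mul_smul_comm, hid0]
  have hN1 : a0 * (a0 * a0) = a0 := by rw [hid0, hid0]
  have hN3 : a0 * (a0 * v) = (1/16 : k) • v := by
    rw [heigv, mul_smul_comm, heigv]; module
  have hN5 := congrArg (fun y : A => a0 * y) hA4
  simp only [mul_add, add_mul, mul_sub, sub_mul, smul_mul_assoc, mul_smul_comm, smul_smul, smul_add, smul_sub, smul_neg, neg_mul, mul_neg, neg_neg] at hN5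
  have hN5m := congrArg (fun y : A => a0 * y) hA5
  simp only [mul_add, add_mul, mul_sub, sub_mul, smul_mul_assoc, mul_smul_comm, smul_smul, smul_add, smul_sub, smul_neg, neg_mul, mul_neg, neg_neg] at hN5m
  have hN6 := congrArg (fun y : A => a0 * y) hA6
  simp only [mul_add, add_mul, mul_sub, sub_mul, smul_mul_assoc, mul_smul_comm, smul_smul, smul_add, smul_sub, smul_neg, neg_mul, mul_neg, neg_neg] at hN6
  have hN6m := congrArg (fun y : A => a0 * y) hA7
  simp only [mul_add, add_mul, mul_sub, sub_mul, smul_mul_assoc, mul_smul_comm, smul_smul, smul_add, smul_sub, smul_neg, neg_mul, mul_neg, neg_neg] at hN6m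
  have hN7 := congrArg (fun y : A => a0 * y) hK1
  simp only [mul_add, add_mul, mul_sub, sub_mul, smul_mul_assoc, mul_smul_comm, smul_smul, smul_add, smul_sub, smul_neg, neg_mul, mul_neg, neg_neg] at hN7
  have hc_u_a0 : u * a0 = a0 * u := mul_comm u a0
  have hc_v_a0 : v * a0 = a0 * v := mul_comm v a0
  have hc_w_a0 : w * a0 = a0 * w := mul_comm w a0
  have hc_v_u : v * u = u * v := mul_comm v u
  have hc_w_u : w * u = u * w := mul_comm w u
  have hc_w_v : w * v = v * w := mul_comm w v
  have hc_S1_a0 : σ1 * a0 = a0 * σ1 := mul_comm σ1 a0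
  have hc_S1_a1 : σ1 * a1 = a1 * σ1 := mul_comm σ1 a1
  have hc_S1_am1 : σ1 * (τ0 a1) = (τ0 a1) * σ1 := mul_comm σ1 (τ0 a1)
  have hc_a1_a0 : a1 * a0 = a0 * a1 := mul_comm a1 a0
  have hc_am1_a0 : (τ0 a1) * a0 = a0 * (τ0 a1) := mul_comm (τ0 a1) a0
  have hc_am1_a1 : (τ0 a1) * a1 = a1 * (τ0 a1) := mul_comm (τ0 a1) a1
  have hLdec_raw := congrArg (fun y : A => a0 * y) hdec
  simp only [mul_add, add_mul, mul_sub, sub_mul, smul_mul_assoc, mul_smul_comm, smul_smul, smul_add, smul_sub, smul_neg, neg_mul, mul_neg, neg_neg] at hLdec_raw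
  have hsq_raw := hid1
  rw [hdec] at hsq_raw
  simp only [mul_add, add_mul, mul_sub, sub_mul, smul_mul_assoc, mul_smul_comm, smul_smul, smul_add, smul_sub, smul_neg, neg_mul, mul_neg, neg_neg] at hsq_raw
  have hsqm_raw := hidm1
  rw [ham1] at hsqm_raw
  simp only [mul_add, add_mul, mul_sub, sub_mul, smul_mul_assoc, mul_smul_comm, smul_smul, smul_add, smul_sub, smul_neg, neg_mul, mul_neg, neg_neg] at hsqm_raw
  have hCsig : ((1 : k)) • σ1 = (((-1/32 : k) + (31/32 : k) * lm)) • a0 + ((-1/32 : k)) • u + ((7/32 : k)) • v := by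
    linear_combination (norm := module) ((-1 : k)) • hA4 +
      hLdec_raw +
      ((-1/32 : k)) • hdec +
      heigu +
      heigv +
      heigw +
      ((1 : k) * lm) • hid0
  have hCV : ((1 : k)) • v = ((4 : k)) • σ1 + (((1/8 : k) + (-4 : k) * lm)) • a0 + ((1/16 : k)) • a1 + ((1/16 : k)) • (τ0 a1) := by
    linear_combination (norm := module) ((4 : k)) • hA4 +
      ((-4 : k)) • hLdec_raw +
      ((-1/16 : k)) • ham1 +
      ((1/16 : k)) • hdec +
      ((-4 : k)) • heigu +
      ((-4 : k)) • heigv +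
      ((-4 : k)) • heigw +
      ((-4 : k) * lm) • hid0
  have hCU : ((1 : k)) • u = ((-4 : k)) • σ1 + (((-1/8 : k) + (3 : k) * lm)) • a0 + ((7/16 : k)) • a1 + ((7/16 : k)) • (τ0 a1) := by
    linear_combination (norm := module) ((-4 : k)) • hA4 +
      ((4 : k)) • hLdec_raw +
      ((-7/16 : k)) • ham1 +
      ((-9/16 : k)) • hdec +
      ((4 : k)) • heigu +
      ((4 : k)) • heigv +
      ((4 : k)) • heigw +
      ((4 : k) * lm) • hid0
  have hwdef : ((1 : k)) • w = ((1/2 : k)) • a1 + ((-1/2 : k)) • (τ0 a1) := by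
    linear_combination (norm := module) ((1/2 : k)) • ham1 +
      ((-1/2 : k)) • hdec
  have hwsq_raw := congrArg (fun y : A => y * y) hwdef
  simp only [mul_add, add_mul, mul_sub, sub_mul, smul_mul_assoc, mul_smul_comm, smul_smul, smul_add, smul_sub, smul_neg, neg_mul, mul_neg, neg_neg] at hwsq_raw
  have hC2 : ((1 : k)) • (w * w) = ((-1/2 : k)) • σ2o + ((15/64 : k)) • a1 + ((15/64 : k)) • (τ0 a1) := by
    linear_combination (norm := module) ((-1/2 : k)) • hA8 +
      ((-1/4 : k)) • hc_am1_a1 +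
      ((1/4 : k)) • hid1 +
      ((1/4 : k)) • hidm1 +
      hwsq_raw
  have hC1 : ((1 : k)) • a1 = ((1 : k) * lm * lm) • a0 + ((1 : k)) • (u * u) + ((2 : k)) • (u * v) + ((2 : k)) • (u * w) + ((1/2 : k) * lm) • v + ((1 : k)) • (v * v) + ((2 : k)) • (v * w) + ((1/16 : k) * lm) • w + ((1 : k)) • (w * w) := by
    linear_combination (norm := module) ((1 : k) * lm) • hc_u_a0 +
      ((1 : k) * lm) • hc_v_a0 +
      hc_v_u +
      ((1 : k) * lm) • hc_w_a0 +
      hc_w_u +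
      hc_w_v +
      hdec +
      ((2 : k) * lm) • heigu +
      ((2 : k) * lm) • heigv +
      ((2 : k) * lm) • heigw +
      ((1 : k) * lm * lm) • hid0 +
      ((-1 : k)) • hsq_raw
  have hC1m : ((1 : k)) • (τ0 a1) = ((1 : k) * lm * lm) • a0 + ((1 : k)) • (u * u) + ((2 : k)) • (u * v) + ((-2 : k)) • (u * w) + ((1/2 : k) * lm) • v + ((1 : k)) • (v * v) + ((-2 : k)) • (v * w) + ((-1/16 : k) * lm) • w + ((1 : k)) • (w * w) := by
    linear_combination (norm := module) ham1 +
      ((1 : k) * lm) • hc_u_a0 +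
      ((1 : k) * lm) • hc_v_a0 +
      hc_v_u +
      ((-1 : k) * lm) • hc_w_a0 +
      ((-1 : k)) • hc_w_u +
      ((-1 : k)) • hc_w_v +
      ((2 : k) * lm) • heigu +
      ((2 : k) * lm) • heigv +
      ((-2 : k) * lm) • heigw +
      ((1 : k) * lm * lm) • hid0 +
      ((-1 : k)) • hsqm_raw
  have hC1L := congrArg (fun y : A => a0 * y) hC1
  simp only [mul_add, add_mul, mul_sub, sub_mul, smul_mul_assoc, mul_smul_comm, smul_smul, smul_add, smul_sub, smul_neg, neg_mul, mul_neg, neg_neg] at hC1L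
  have hC1LL := congrArg (fun y : A => a0 * y) hC1L
  simp only [mul_add, add_mul, mul_sub, sub_mul, smul_mul_assoc, mul_smul_comm, smul_smul, smul_add, smul_sub, smul_neg, neg_mul, mul_neg, neg_neg] at hC1LL
  have hC1mL := congrArg (fun y : A => a0 * y) hC1m
  simp only [mul_add, add_mul, mul_sub, sub_mul, smul_mul_assoc, mul_smul_comm, smul_smul, smul_add, smul_sub, smul_neg, neg_mul, mul_neg, neg_neg] at hC1mL
  have hC1mLL := congrArg (fun y : A => a0 * y) hC1mL
  simp only [mul_add, add_mul, mul_sub, sub_mul, smul_mul_assoc, mul_smul_comm, smul_smul, smul_add, smul_sub, smul_neg, neg_mul, mul_neg, neg_neg] at hC1mLL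
  have hC2L := congrArg (fun y : A => a0 * y) hC2
  simp only [mul_add, add_mul, mul_sub, sub_mul, smul_mul_assoc, mul_smul_comm, smul_smul, smul_add, smul_sub, smul_neg, neg_mul, mul_neg, neg_neg] at hC2L
  have hC2LL := congrArg (fun y : A => a0 * y) hC2L
  simp only [mul_add, add_mul, mul_sub, sub_mul, smul_mul_assoc, mul_smul_comm, smul_smul, smul_add, smul_sub, smul_neg, neg_mul, mul_neg, neg_neg] at hC2LL
  have hCT_raw := congrArg (fun y : A => y * y) hCsig
  simp only [mul_add, add_mul, mul_sub, sub_mul, smul_mul_assoc, mul_smul_comm, smul_smul, smul_add, smul_sub, smul_neg, neg_mul, mul_neg, neg_neg] at hCT_raw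
  have hCT : ((1 : k)) • (σ1 * σ1) = (((1/1024 : k) + (-31/512 : k) * lm + (961/1024 : k) * lm * lm)) • a0 + ((1/1024 : k)) • (u * u) + ((-7/512 : k)) • (u * v) + (((-7/2048 : k) + (217/2048 : k) * lm)) • v + ((49/1024 : k)) • (v * v) := by
    linear_combination (norm := module) hCT_raw +
      (((1/1024 : k) + (-31/1024 : k) * lm)) • hc_u_a0 +
      (((-7/1024 : k) + (217/1024 : k) * lm)) • hc_v_a0 +
      ((-7/1024 : k)) • hc_v_u +
      (((1/512 : k) + (-31/512 : k) * lm)) • heigu +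
      (((-7/512 : k) + (217/512 : k) * lm)) • heigv +
      (((1/1024 : k) + (-31/512 : k) * lm + (961/1024 : k) * lm * lm)) • hid0
  have hCTL := congrArg (fun y : A => a0 * y) hCT
  simp only [mul_add, add_mul, mul_sub, sub_mul, smul_mul_assoc, mul_smul_comm, smul_smul, smul_add, smul_sub, smul_neg, neg_mul, mul_neg, neg_neg] at hCTL
  have hCTLL := congrArg (fun y : A => a0 * y) hCTL
  simp only [mul_add, add_mul, mul_sub, sub_mul, smul_mul_assoc, mul_smul_comm, smul_smul, smul_add, smul_sub, smul_neg, neg_mul, mul_neg, neg_neg] at hCTLL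
  have hVsq_raw := congrArg (fun y : A => y * y) hCV
  simp only [mul_add, add_mul, mul_sub, sub_mul, smul_mul_assoc, mul_smul_comm, smul_smul, smul_add, smul_sub, smul_neg, neg_mul, mul_neg, neg_neg] at hVsq_raw
  have hVsq : ((1 : k)) • (v * v) = (((15/32 : k) + (-8 : k) * lm)) • σ1 + ((16 : k)) • (σ1 * σ1) + ((1/128 : k)) • σ2o + (((-9/2048 : k) + (1/2 : k) * lm + (-8 : k) * lm * lm)) • a0 + (((-17/4096 : k) + (1/4 : k) * lm)) • a1 + ((7/4096 : k)) • (τ1 a0) + (((-17/4096 : k) + (1/4 : k) * lm)) • (τ0 a1) + ((7/4096 : k)) • (τ0 (τ1 a0)) := by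
    linear_combination (norm := module) (((1/64 : k) + (-1/2 : k) * lm)) • hA4 +
      (((1/64 : k) + (-1/2 : k) * lm)) • hA5 +
      ((1/128 : k)) • hA8 +
      (((1 : k) + (-32 : k) * lm)) • hK1 +
      ((1/2 : k)) • hK2 +
      ((1/2 : k)) • hK3 +
      hVsq_raw +
      (((1/2 : k) + (-16 : k) * lm)) • hc_S1_a0 +
      ((1/4 : k)) • hc_S1_a1 +
      ((1/4 : k)) • hc_S1_am1 +
      (((1/128 : k) + (-1/4 : k) * lm)) • hc_a1_a0 +
      (((1/128 : k) + (-1/4 : k) * lm)) • hc_am1_a0 +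
      ((1/256 : k)) • hc_am1_a1 +
      (((1/64 : k) + (-1 : k) * lm + (16 : k) * lm * lm)) • hid0 +
      ((1/256 : k)) • hid1 +
      ((1/256 : k)) • hidm1
  have hVsqL := congrArg (fun y : A => a0 * y) hVsq
  simp only [mul_add, add_mul, mul_sub, sub_mul, smul_mul_assoc, mul_smul_comm, smul_smul, smul_add, smul_sub, smul_neg, neg_mul, mul_neg, neg_neg] at hVsqL
  have hVsqLL := congrArg (fun y : A => a0 * y) hVsqL
  simp only [mul_add, add_mul, mul_sub, sub_mul, smul_mul_assoc, mul_smul_comm, smul_smul, smul_add, smul_sub, smul_neg, neg_mul, mul_neg, neg_neg] at hVsqLL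
  have hPa1v1 := congrArg (fun y : A => y * v) hdec
  simp only [mul_add, add_mul, mul_sub, sub_mul, smul_mul_assoc, mul_smul_comm, smul_smul, smul_add, smul_sub, smul_neg, neg_mul, mul_neg, neg_neg] at hPa1v1
  have hPa1v2 := congrArg (fun y : A => a1 * y) hCV
  simp only [mul_add, add_mul, mul_sub, sub_mul, smul_mul_assoc, mul_smul_comm, smul_smul, smul_add, smul_sub, smul_neg, neg_mul, mul_neg, neg_neg] at hPa1v2
  have hPam1v1 := congrArg (fun y : A => y * v) ham1
  simp only [mul_add, add_mul, mul_sub, sub_mul, smul_mul_assoc, mul_smul_comm, smul_smul, smul_add, smul_sub, smul_neg, neg_mul, mul_neg, neg_neg] at hPam1v1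
  have hPam1v2 := congrArg (fun y : A => (τ0 a1) * y) hCV
  simp only [mul_add, add_mul, mul_sub, sub_mul, smul_mul_assoc, mul_smul_comm, smul_smul, smul_add, smul_sub, smul_neg, neg_mul, mul_neg, neg_neg] at hPam1v2
  have hPa1u1 := congrArg (fun y : A => y * u) hdec
  simp only [mul_add, add_mul, mul_sub, sub_mul, smul_mul_assoc, mul_smul_comm, smul_smul, smul_add, smul_sub, smul_neg, neg_mul, mul_neg, neg_neg] at hPa1u1
  have hPa1u2 := congrArg (fun y : A => a1 * y) hCU
  simp only [mul_add, add_mul, mul_sub, sub_mul, smul_mul_assoc, mul_smul_comm, smul_smul, smul_add, smul_sub, smul_neg, neg_mul, mul_neg, neg_neg] at hPa1u2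
  have hPam1u1 := congrArg (fun y : A => y * u) ham1
  simp only [mul_add, add_mul, mul_sub, sub_mul, smul_mul_assoc, mul_smul_comm, smul_smul, smul_add, smul_sub, smul_neg, neg_mul, mul_neg, neg_neg] at hPam1u1
  have hPam1u2 := congrArg (fun y : A => (τ0 a1) * y) hCU
  simp only [mul_add, add_mul, mul_sub, sub_mul, smul_mul_assoc, mul_smul_comm, smul_smul, smul_add, smul_sub, smul_neg, neg_mul, mul_neg, neg_neg] at hPam1u2
  linear_combination (norm := module) (((731/9216 : k) + (-5055/2048 : k) * lm)) • hA4 +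
      (((185/9216 : k) + (-3523/6144 : k) * lm)) • hA5 +
      ((-217/73728 : k)) • hA6 +
      ((-217/73728 : k)) • hA7 +
      ((7/2048 : k)) • hA8 +
      ((-1/72 : k)) • hC1L +
      ((1/72 : k)) • hC1LL +
      ((-1/72 : k)) • hC1mL +
      ((1/72 : k)) • hC1mLL +
      ((-1/36 : k)) • hC2L +
      ((1/36 : k)) • hC2LL +
      ((-256/9 : k)) • hCTL +
      ((256/9 : k)) • hCTLL +
      hCT_raw +
      (((-49/72 : k) + (12 : k) * lm)) • hK1 +
      ((3/32 : k)) • hK2 +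
      ((3/32 : k)) • hK3 +
      ((7/1152 : k)) • hK4 +
      (((-91/1536 : k) + (5821/3072 : k) * lm)) • hLdec_raw +
      (((23/1152 : k) + (-5/6 : k) * lm + (25/2 : k) * lm * lm)) • hN1 +
      (((-7/72 : k) + (109/36 : k) * lm)) • hN3 +
      (((-17/1152 : k) + (4/9 : k) * lm)) • hN5 +
      (((-17/1152 : k) + (4/9 : k) * lm)) • hN5m +
      ((7/2304 : k)) • hN6 +
      ((7/2304 : k)) • hN6m +
      (((5/6 : k) + (-128/9 : k) * lm)) • hN7 +
      ((-1/2048 : k)) • hPa1u1 +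
      ((1/2048 : k)) • hPa1u2 +
      ((-49/2048 : k)) • hPa1v1 +
      ((49/2048 : k)) • hPa1v2 +
      ((-1/2048 : k)) • hPam1u1 +
      ((1/2048 : k)) • hPam1u2 +
      ((-49/2048 : k)) • hPam1v1 +
      ((49/2048 : k)) • hPam1v2 +
      ((-16/9 : k)) • hVsqL +
      ((16/9 : k)) • hVsqLL +
      (((-91/98304 : k) + (5821/196608 : k) * lm)) • ham1 +
      (((3/1024 : k) + (-193/2048 : k) * lm)) • hc_a1_a0 +
      (((3/1024 : k) + (-193/2048 : k) * lm)) • hc_am1_a0 +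
      ((7/4096 : k)) • hc_am1_a1 +
      (((1/1024 : k) + (-31/1024 : k) * lm)) • hc_u_a0 +
      (((-7/1024 : k) + (217/1024 : k) * lm)) • hc_v_a0 +
      ((-1/128 : k)) • hc_v_u +
      (((91/98304 : k) + (-5821/196608 : k) * lm)) • hdec +
      (((-11/192 : k) + (11/6 : k) * lm)) • heigu +
      (((7/288 : k) + (-109/144 : k) * lm)) • heigv +
      (((-91/1536 : k) + (5821/3072 : k) * lm)) • heigw +
      ((-1/18 : k)) • hf00 +
      ((1/18 : k)) • hf00b +
      ((1/3 : k)) • hf04 +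
      ((-1/3 : k)) • hf04b +
      ((-7/18 : k)) • hgfix +
      (((-1477/36864 : k) + (329/192 : k) * lm + (-61/3 : k) * lm * lm)) • hid0 +
      ((7/4096 : k)) • hid1 +
      ((7/4096 : k)) • hidm1
end

section
/- The set of common zeros in ℚ² of the two polynomials p₁ and p₂ is exactly the nine points {(1,1), (0,1), (1/8,1), (1/64,1/64), (13/256,13/256), (1/32,0), (1/64,1/8), (3/128,3/128), (5/256,13/256)}, where p₁(x,y) = x⁴ − (71/64)x³ + (5/256)x²y + (45/512)x² + (139/32768)xy + (1/16384)y² − (75/32768)x − (167/2097152)y + 39/2097152 and p₂(x,y) = x⁵ − (577/512)x⁴ + (25/512)x³y + (1347/16384)x³ − (389/131072)x²y + (23/131072)xy² − (105/65536)x² + (5183/16777216)xy + (87/16777216)y² − (63/16777216)x − (2901/536870912)y + 117/536870912. -/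
/-- The first polynomial relation. -/
def p₁ (x y : ℚ) : ℚ :=
  x ^ 4 - (71/64) * x ^ 3 + (5/256) * x ^ 2 * y + (45/512) * x ^ 2 + (139/32768) * x * y +
    (1/16384) * y ^ 2 - (75/32768) * x - (167/2097152) * y + 39/2097152

/-- The second polynomial relation. -/
def p₂ (x y : ℚ) : ℚ :=
  x ^ 5 - (577/512) * x ^ 4 + (25/512) * x ^ 3 * y + (1347/16384) * x ^ 3 -
    (389/131072) * x ^ 2 * y + (23/131072) * x * y ^ 2 - (105/65536) * x ^ 2 +
    (5183/16777216) * x * y + (87/16777216) * y ^ 2 - (63/16777216) * x -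
    (2901/536870912) * y + 117/536870912

/-- The set of common rational zeros of `p₁` and `p₂` consists of exactly nine points. -/
theorem common_zeros_of_p₁_p₂ :
    {p : ℚ × ℚ | p₁ p.1 p.2 = 0 ∧ p₂ p.1 p.2 = 0} =
      ({((1 : ℚ), (1 : ℚ)), (0, 1), (1/8, 1), (1/64, 1/64), (13/256, 13/256), (1/32, 0),
        (1/64, 1/8), (3/128, 3/128), (5/256, 13/256)} : Set (ℚ × ℚ)) := by
  ext ⟨x, y⟩
  simp only [Set.mem_setOf_eq, Set.mem_insert_iff, Set.mem_singleton_iff, Prod.mk.injEq]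
  constructor
  · rintro ⟨h1, h2⟩
    unfold p₁ at h1
    unfold p₂ at h2
    have hx : x * (x - 1) * (x - 1/8) * (x - 1/64) ^ 2 * (x - 13/256) * (x - 1/32) *
        (x - 3/128) * (x - 5/256) = 0 := by
      linear_combination ((1521/3367254360064) + (161867/105226698752) * x +
        (-979625/4932501504) * x^2 + (1403183/192675840) * x^3 + (-45393/501760) * x^4 +
        (20347/11760) * x^5 + (32/735) * x^6 + (-1131/105226698752) * y +
        (-14503/8220835840) * x * y + (16447/192675840) * x^2 * y + (2283/501760) * x^3 * y +
        (23/11760) * x^4 * y) * h1 +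
        ((-507/13153337344) + (-7849/308281344) * x + (33293/9633792) * x^2 +
        (-11961/125440) * x^3 + (-307/420) * x^4 + (-32/735) * x^5 + (13/102760448) * y +
        (397/24084480) * x * y + (-1/640) * x^2 * y + (-1/1470) * x^3 * y) * h2
    have hcases : x = 0 ∨ x = 1 ∨ x = 1/8 ∨ x = 1/64 ∨ x = 13/256 ∨ x = 1/32 ∨
        x = 3/128 ∨ x = 5/256 := by
      rcases mul_eq_zero.mp hx with h | h
      rcases mul_eq_zero.mp h with h | h
      rcases mul_eq_zero.mp h with h | h
      rcases mul_eq_zero.mp h with h | h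
      rcases mul_eq_zero.mp h with h | h
      rcases mul_eq_zero.mp h with h | h
      rcases mul_eq_zero.mp h with h | h
      · exact Or.inl h
      · exact Or.inr (Or.inl (by linarith))
      · exact Or.inr (Or.inr (Or.inl (by linarith)))
      · have := pow_eq_zero_iff (n := 2) (by norm_num) |>.mp h
        exact Or.inr (Or.inr (Or.inr (Or.inl (by linarith))))
      · exact Or.inr (Or.inr (Or.inr (Or.inr (Or.inl (by linarith)))))
      · exact Or.inr (Or.inr (Or.inr (Or.inr (Or.inr (Or.inl (by linarith))))))
      · exact Or.inr (Or.inr (Or.inr (Or.inr (Or.inr (Or.inr (Or.inl (by linarith)))))))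
      · exact Or.inr (Or.inr (Or.inr (Or.inr (Or.inr (Or.inr (Or.inr (by linarith)))))))
    rcases hcases with rfl | rfl | rfl | rfl | rfl | rfl | rfl | rfl
    · -- x = 0, y = 1
      have hy : y = 1 := by
        linear_combination (-60817408/975) * h1 + (2147483648/2925) * h2
      exact Or.inr (Or.inl ⟨rfl, hy⟩)
    · -- x = 1, y = 1
      have hy : y = 1 := by
        linear_combination (908066816/7353045) * h1 + (-2147483648/51471315) * h2
      exact Or.inl ⟨rfl, hy⟩
    · -- x = 1/8, y = 1
      have hy : y = 1 := by
        linear_combination (2097152/1197) * h1 + (-2147483648/544635) * h2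
      exact Or.inr (Or.inr (Or.inl ⟨rfl, hy⟩))
    · -- x = 1/64, y = 1/64 or 1/8
      have hy : (y - 1/64) * (y - 1/8) = 0 := by
        linear_combination (16777216/133) * h2
      rcases mul_eq_zero.mp hy with h | h
      · exact Or.inr (Or.inr (Or.inr (Or.inl ⟨rfl, by linarith⟩)))
      · exact Or.inr (Or.inr (Or.inr (Or.inr (Or.inr (Or.inr (Or.inl ⟨rfl, by linarith⟩))))))
    · -- x = 13/256, y = 13/256
      have hy : y = 13/256 := by
        linear_combination (7935623168/1167075) * h1 + (-34359738368/1167075) * h2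
      exact Or.inr (Or.inr (Or.inr (Or.inr (Or.inl ⟨rfl, hy⟩))))
    · -- x = 1/32, y = 0
      have hy : y = 0 := by
        linear_combination (375390208/20925) * h1 + (-2147483648/20925) * h2
      exact Or.inr (Or.inr (Or.inr (Or.inr (Or.inr (Or.inl ⟨rfl, hy⟩)))))
    · -- x = 3/128, y = 3/128
      have hy : y = 3/128 := by
        linear_combination (4194304/105) * h1 + (-1073741824/4095) * h2
      exact Or.inr (Or.inr (Or.inr (Or.inr (Or.inr (Or.inr (Or.inr (Or.inl ⟨rfl, hy⟩)))))))
    · -- x = 5/256, y = 13/256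
      have hy : y = 13/256 := by
        linear_combination (4848615424/56475) * h1 + (-34359738368/56475) * h2
      exact Or.inr (Or.inr (Or.inr (Or.inr (Or.inr (Or.inr (Or.inr (Or.inr ⟨rfl, hy⟩)))))))
  · rintro (⟨rfl, rfl⟩ | ⟨rfl, rfl⟩ | ⟨rfl, rfl⟩ | ⟨rfl, rfl⟩ | ⟨rfl, rfl⟩ | ⟨rfl, rfl⟩ |
      ⟨rfl, rfl⟩ | ⟨rfl, rfl⟩ | ⟨rfl, rfl⟩) <;> constructor <;> norm_num [p₁, p₂]
end
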